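/- Let C_1, …, C_k ⊆ C be cylinder sets, each obtained by fixing the coordinates on a finite subset of F_ℓ. Then there exist h⁺ ∈ H_C^+ and h⁻ ∈ H_C^- such that h = h⁺∘h⁻ satisfies μ_C(h C_i ∩ C_j) = μ_C(C_i)·μ_C(C_j) for all 1 ≤ i, j ≤ k. -/

import Mathlib

open MeasureTheory ProbabilityTheory Filter

namespace Finitary

/-- The free group `F_ℓ` on `ℓ` generators. -/
abbrev FG (ℓ : ℕ) := FreeGroup (Fin ℓ)

instance {ℓ : ℕ} : Countable (FG ℓ) := FreeGroup.toWord_injective.countable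

/-- The word length on the free group. -/
noncomputable def wl {ℓ : ℕ} (g : FG ℓ) : ℕ := FreeGroup.norm g

/-- The ball `B(r)` of radius `r` centered at the identity. -/
def ball (ℓ r : ℕ) : Set (FG ℓ) := {g | wl g ≤ r}

/-- `W_a`: the set of reduced words ending in the generator `a`, together with the identity. -/
def Wa {ℓ : ℕ} (a : Fin ℓ) : Set (FG ℓ) :=
  {g | g = 1 ∨ wl g = wl (g * (FreeGroup.of a)⁻¹) + 1}

/-- The configuration space `X_p = {1,…,m}^{F_ℓ}`. -/
abbrev Conf (ℓ m : ℕ) := FG ℓ → Fin m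

/-- The shift action `(g·x)_h = x_{g⁻¹h}`. -/
def shift {ℓ m : ℕ} (g : FG ℓ) (x : Conf ℓ m) : Conf ℓ m := fun h => x (g⁻¹ * h)

/-- `μ` is the Bernoulli product measure on `X_p` with marginal weights `P`:
every cylinder set has measure equal to the product of the weights of its fixed symbols. -/
def IsBernoulli {ℓ m : ℕ} (P : Fin m → ℝ) (μ : Measure (Conf ℓ m)) : Prop :=
  IsProbabilityMeasure μ ∧
    ∀ (A : Finset (FG ℓ)) (σ : FG ℓ → Fin m),
      (μ {x | ∀ g ∈ A, x g = σ g}).toReal = ∏ g ∈ A, P (σ g)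

/-- The set of radii `r` such that the ball `B(r)` determines `φ(x)_e`. -/
def codeSet {ℓ m n : ℕ} (φ : Conf ℓ m → Conf ℓ n) (x : Conf ℓ m) : Set ℕ :=
  {r | ∀ x' : Conf ℓ m, (∀ g ∈ ball ℓ r, x' g = x g) → φ x' 1 = φ x 1}

/-- `r_φ(x)`: the least radius of a ball determining `φ(x)_e`. -/
noncomputable def rphi {ℓ m n : ℕ} (φ : Conf ℓ m → Conf ℓ n) (x : Conf ℓ m) : ℕ :=
  sInf (codeSet φ x)

/-- `v_φ(x) = |B(r_φ(x))|`. -/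
noncomputable def vphi {ℓ m n : ℕ} (φ : Conf ℓ m → Conf ℓ n) (x : Conf ℓ m) : ℕ :=
  (ball ℓ (rphi φ x)).ncard

/-- A finitary coding: a measurable, equivariant, measure-preserving map which is
a.e. finitarily determined at the identity coordinate (i.e. continuous off a null set). -/
structure IsFinitaryCoding {ℓ m n : ℕ} (μp : Measure (Conf ℓ m)) (μq : Measure (Conf ℓ n))
    (φ : Conf ℓ m → Conf ℓ n) : Prop where
  measurable : Measurable φ
  measurePreserving : MeasurePreserving φ μp μq
  equivariant : ∀ g : FG ℓ, ∀ᵐ x ∂μp, φ (shift g x) = shift g (φ x)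
  finitary : ∀ᵐ x ∂μp, (codeSet φ x).Nonempty

/-- A finitary isomorphism: a pair of mutually inverse (mod null sets) finitary codings. -/
structure IsFinitaryIso {ℓ m n : ℕ} (μp : Measure (Conf ℓ m)) (μq : Measure (Conf ℓ n))
    (φ : Conf ℓ m → Conf ℓ n) (ψ : Conf ℓ n → Conf ℓ m) : Prop where
  toCoding : IsFinitaryCoding μp μq φ
  invCoding : IsFinitaryCoding μq μp ψ
  leftInv : ∀ᵐ x ∂μp, ψ (φ x) = x
  rightInv : ∀ᵐ y ∂μq, φ (ψ y) = y

/-- Finite expectation of code volume: `∫ v_φ dμ_p < ∞` and `∫ v_{φ⁻¹} dμ_q < ∞`. -/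
def FiniteExpectation {ℓ m n : ℕ} (μp : Measure (Conf ℓ m)) (μq : Measure (Conf ℓ n))
    (φ : Conf ℓ m → Conf ℓ n) (ψ : Conf ℓ n → Conf ℓ m) : Prop :=
  (∫⁻ x, (vphi φ x : ENNReal) ∂μp) < ⊤ ∧ (∫⁻ y, (vphi ψ y : ENNReal) ∂μq) < ⊤

/-- The sub-σ-algebra generated by the coordinate maps `x ↦ x_g`, `g ∈ S`. -/
def coordAlg {ℓ m : ℕ} (S : Set (FG ℓ)) : MeasurableSpace (Conf ℓ m) :=
  MeasurableSpace.comap (fun x => S.restrict x) inferInstance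

/-- The past algebra `𝒜_{p,a}`, generated by the coordinates in `W_a`. -/
def pastAlg {ℓ m : ℕ} (a : Fin ℓ) : MeasurableSpace (Conf ℓ m) := coordAlg (Wa a)

/-- The atom of `x` for the σ-algebra generated by the coordinates in `S`. -/
def atomOn {ℓ m : ℕ} (S : Set (FG ℓ)) (x : Conf ℓ m) : Set (Conf ℓ m) :=
  {y | ∀ g ∈ S, y g = x g}

/-- The regular conditional probability `μ^𝒞(s | x)` given the sub-σ-algebra `𝒞`. -/
noncomputable def condProb {ℓ m : ℕ} (μ : Measure (Conf ℓ m)) [IsFiniteMeasure μ]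
    (𝒞 : MeasurableSpace (Conf ℓ m)) (s : Set (Conf ℓ m)) (x : Conf ℓ m) : ENNReal :=
  @condExpKernel (Conf ℓ m) MeasurableSpace.pi inferInstance μ inferInstance 𝒞 x s

/-- Conditional information `I_μ(ℬ|𝒞)(x) = −log μ^𝒞([x]_ℬ | x)`, where the atom `[x]_ℬ`
of the sub-σ-algebra `ℬ` is supplied explicitly. -/
noncomputable def condInfo {ℓ m : ℕ} (μ : Measure (Conf ℓ m)) [IsFiniteMeasure μ]
    (𝒞 : MeasurableSpace (Conf ℓ m)) (atomB : Set (Conf ℓ m)) (x : Conf ℓ m) : ℝ :=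
  - Real.log ((condProb μ 𝒞 atomB x).toReal)

/-- The information cocycle `J(𝒜_{p,a}, V) = I(𝒜_{p,a}|V⁻¹𝒜_{p,a}) − I(V⁻¹𝒜_{p,a}|𝒜_{p,a})`
for a measure-preserving `V` (the Radon–Nikodym term of the general definition vanishes). -/
noncomputable def Jcoc {ℓ m : ℕ} (a : Fin ℓ) (μ : Measure (Conf ℓ m)) [IsFiniteMeasure μ]
    (V : Conf ℓ m → Conf ℓ m) (x : Conf ℓ m) : ℝ :=
  condInfo μ (MeasurableSpace.comap V (pastAlg a)) (atomOn (Wa a) x) x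
    - condInfo μ (pastAlg a) (V ⁻¹' atomOn (Wa a) (V x)) x

/-- The shift by `g` as a bijection of the configuration space. -/
def shiftEquiv {ℓ m : ℕ} (g : FG ℓ) : Equiv.Perm (Conf ℓ m) where
  toFun := shift g
  invFun := shift g⁻¹
  left_inv x := by funext h; simp [shift, mul_assoc]
  right_inv x := by funext h; simp [shift, mul_assoc]

/-- A locally finite measure-preserving measurable bijection of `(X_p, μ)`. -/
def IsLocallyFiniteMP {ℓ m : ℕ} (μ : Measure (Conf ℓ m)) (V : Equiv.Perm (Conf ℓ m)) : Prop :=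
  Measurable ⇑V ∧ Measurable ⇑V.symm ∧ MeasurePreserving ⇑V μ μ ∧
    ∀ᵐ x ∂μ, {g : FG ℓ | V x g ≠ x g}.Finite

/-- The group `G_p` generated by the shifts together with the locally finite
measure-preserving bijections. -/
def Gp {ℓ m : ℕ} (μ : Measure (Conf ℓ m)) : Subgroup (Equiv.Perm (Conf ℓ m)) :=
  Subgroup.closure ({V | ∃ g : FG ℓ, V = shiftEquiv g} ∪ {V | IsLocallyFiniteMP μ V})

/-- The cylinder set where the coordinates on `S` are fixed to the values of `η`. -/
def cylOn {ℓ m : ℕ} (S : Set (FG ℓ)) (η : FG ℓ → Fin m) : Set (Conf ℓ m) :=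
  {x | ∀ g ∈ S, x g = η g}

/-- `H_C^+`: locally finite m.p. bijections fixing all coordinates in `B(N) ∪ (F_ℓ ∖ W_a)`. -/
def HCplus {ℓ m : ℕ} (μ : Measure (Conf ℓ m)) (a : Fin ℓ) (N : ℕ) :
    Set (Equiv.Perm (Conf ℓ m)) :=
  {h | IsLocallyFiniteMP μ h ∧ ∀ᵐ x ∂μ, ∀ g ∈ ball ℓ N ∪ (Wa a)ᶜ, h x g = x g}

/-- `H_C^-`: locally finite m.p. bijections fixing all coordinates in `W_a ∪ B(N)`. -/
def HCminus {ℓ m : ℕ} (μ : Measure (Conf ℓ m)) (a : Fin ℓ) (N : ℕ) :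
    Set (Equiv.Perm (Conf ℓ m)) :=
  {h | IsLocallyFiniteMP μ h ∧ ∀ᵐ x ∂μ, ∀ g ∈ Wa a ∪ ball ℓ N, h x g = x g}

/-- The normalized measure `μ_C(A) = μ(A)/μ(C)` (real-valued). -/
noncomputable def relMeas {ℓ m : ℕ} (μ : Measure (Conf ℓ m)) (C A : Set (Conf ℓ m)) : ℝ :=
  (μ A).toReal / (μ C).toReal

/-- The set where `m_φ(x) ≤ M`. -/
def mphiLe {ℓ m n : ℕ} (φ : Conf ℓ m → Conf ℓ n) (a : Fin ℓ) (M : ℕ) : Set (Conf ℓ m) :=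
  {x | ∀ g ∈ Wa a, rphi φ (shift g⁻¹ x) ≤ wl g + M}

/-- The set where `a_φ(x) ≤ M`. -/
def aphiLe {ℓ m n : ℕ} (φ : Conf ℓ m → Conf ℓ n) (a : Fin ℓ) (M : ℕ) : Set (Conf ℓ m) :=
  {x | ∀ g ∉ Wa a, rphi φ (shift g⁻¹ x) ≤ wl g + M}

/-- The set `D = C ∩ {x : m_φ(x) ≤ M, a_φ(x) ≤ M}` for the cylinder `C` over `B(M)`
determined by `η`. -/
def Dset {ℓ m n : ℕ} (φ : Conf ℓ m → Conf ℓ n) (a : Fin ℓ) (M : ℕ) (η : FG ℓ → Fin m) :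
    Set (Conf ℓ m) :=
  cylOn (ball ℓ M) η ∩ (mphiLe φ a M ∩ aphiLe φ a M)

/-- The coboundary equation `J(𝒜_{p,a}, V) = J(𝒜_{q,a}, φVφ⁻¹)∘φ + f∘V − f` a.e.,
for every `V ∈ G_p`. -/
def CocycleEq {ℓ m n : ℕ} (a : Fin ℓ) (μp : Measure (Conf ℓ m)) (μq : Measure (Conf ℓ n))
    [IsFiniteMeasure μp] [IsFiniteMeasure μq] (φ : Conf ℓ m → Conf ℓ n)
    (ψ : Conf ℓ n → Conf ℓ m) (f : Conf ℓ m → ℝ) : Prop :=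
  ∀ V ∈ Gp μp, ∀ᵐ x ∂μp,
    Jcoc a μp (⇑V) x = Jcoc a μq (φ ∘ ⇑V ∘ ψ) (φ x) + f (V x) - f x

/-- Tail property: every point obtained from a point of `D ∖ E` by altering coordinates only
at `a^k` for `−M−n < k < −M` (or only at `a^k` for `M < k < M+n`) lies in `A`. -/
def TailProp {ℓ m : ℕ} (a : Fin ℓ) (M : ℕ) (D E A : Set (Conf ℓ m)) : Prop :=
  ∀ x ∈ D \ E, ∀ n : ℕ, ∀ x' : Conf ℓ m,
    ((∀ g : FG ℓ,
        (¬ ∃ k : ℤ, -(M : ℤ) - (n : ℤ) < k ∧ k < -(M : ℤ) ∧ g = (FreeGroup.of a) ^ k) →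
        x' g = x g) ∨
     (∀ g : FG ℓ,
        (¬ ∃ k : ℤ, (M : ℤ) < k ∧ k < (M : ℤ) + (n : ℤ) ∧ g = (FreeGroup.of a) ^ k) →
        x' g = x g)) →
    x' ∈ A


/-! The product `h⁺ h⁻` is taken to be the coordinate permutation `x ↦ x ∘ ρ⁻¹` of a finitely
supported permutation `ρ` of `F_ℓ` which fixes `B(N)` and sends every other coordinate used by the
cylinders `C_i` to a fresh coordinate: those in `W_a` to unused points of `W_a`, the others to unused
points outside `W_a` (both sets are infinite), so that the two factors lie in `H_C^+` and `H_C^-`.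
Then `h C_i ∩ C_j` is a cylinder over the disjoint union of `ρ (supp C_i ∖ B(N))`,
`supp C_j ∖ B(N)` and `B(N)`, and the Bernoulli product formula factorises its measure as
`μ(C_i) μ(C_j) / μ(C)`. -/

open Set Equiv

section Cylinders

variable {ι β : Type*}

def cyl (A : Finset ι) (σ : ι → β) : Set (ι → β) := {x | ∀ i ∈ A, x i = σ i}

@[simp]
theorem mem_cyl {A : Finset ι} {σ : ι → β} {x : ι → β} : x ∈ cyl A σ ↔ ∀ i ∈ A, x i = σ i :=
  Iff.rfl

theorem cyl_inter_cyl [DecidableEq ι] {A A' : Finset ι} {σ σ' : ι → β}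
    (h : ∀ i ∈ A, i ∈ A' → σ i = σ' i) :
    cyl A σ ∩ cyl A' σ' = cyl (A ∪ A') (A.piecewise σ σ') := by
  ext x
  simp only [mem_inter_iff, mem_cyl, Finset.mem_union]
  constructor
  · rintro ⟨hx, hx'⟩ i hi
    by_cases hiA : i ∈ A
    · rw [Finset.piecewise_eq_of_mem _ _ _ hiA, hx i hiA]
    · rw [Finset.piecewise_eq_of_notMem _ _ _ hiA, hx' i (hi.resolve_left hiA)]
  · intro hx
    refine ⟨fun i hi => ?_, fun i hi => ?_⟩
    · rw [hx i (Or.inl hi), Finset.piecewise_eq_of_mem _ _ _ hi]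
    · by_cases hiA : i ∈ A
      · rw [hx i (Or.inl hiA), Finset.piecewise_eq_of_mem _ _ _ hiA, h i hiA hi]
      · rw [hx i (Or.inr hi), Finset.piecewise_eq_of_notMem _ _ _ hiA]

theorem cyl_eq_cyl_sdiff_inter [DecidableEq ι] {A B : Finset ι} {σ η : ι → β}
    (h : cyl A σ ⊆ cyl B η) : cyl A σ = cyl (A \ B) σ ∩ cyl B η := by
  have hσ : ∀ i ∈ B, σ i = η i := h fun _ _ => rfl
  refine Subset.antisymm (subset_inter (fun x hx i hi => hx i (Finset.mem_sdiff.1 hi).1) h) ?_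
  rintro x ⟨hx, hxB⟩ i hi
  by_cases hiB : i ∈ B
  · rw [hxB i hiB, hσ i hiB]
  · exact hx i (Finset.mem_sdiff.2 ⟨hi, hiB⟩)

theorem isPiSystem_cyl : IsPiSystem {s : Set (ι → β) | ∃ A σ, cyl A σ = s} := by
  classical
  rintro _ ⟨A, σ, rfl⟩ _ ⟨A', σ', rfl⟩ ⟨x, hx, hx'⟩
  exact ⟨_, _, (cyl_inter_cyl fun i hi hi' => (hx i hi).symm.trans (hx' i hi')).symm⟩

variable [MeasurableSpace β] [MeasurableSingletonClass β]

theorem measurableSet_cyl (A : Finset ι) (σ : ι → β) : MeasurableSet (cyl A σ) :=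
  show MeasurableSet ((A : Set ι).pi fun i => {σ i}) from
    .pi A.countable_toSet fun _ _ => measurableSet_singleton _

theorem generateFrom_cyl [Countable β] :
    MeasurableSpace.generateFrom {s : Set (ι → β) | ∃ A σ, cyl A σ = s} = MeasurableSpace.pi := by
  refine le_antisymm (MeasurableSpace.generateFrom_le ?_) (iSup_le fun i => ?_)
  · rintro _ ⟨A, σ, rfl⟩
    exact measurableSet_cyl A σ
  · have hcoord : Measurable[MeasurableSpace.generateFrom {s | ∃ A σ, cyl A σ = s}]
        fun x : ι → β => x i := fun s _ => by
      have hpre : (fun x : ι → β => x i) ⁻¹' s = ⋃ v ∈ s, cyl {i} fun _ => v := by ext; simp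
      rw [hpre]
      exact .biUnion s.to_countable fun _ _ => MeasurableSpace.measurableSet_generateFrom ⟨_, _, rfl⟩
    exact hcoord.comap_le

end Cylinders

section CoordPerm

variable {α β : Type*}

def coordPerm : Perm α →* Perm (α → β) where
  toFun π := π.arrowCongr (Equiv.refl β)
  map_one' := rfl
  map_mul' _ _ := rfl

@[simp]
theorem coordPerm_apply (π : Perm α) (x : α → β) (a : α) : coordPerm π x a = x (π⁻¹ a) := rfl

theorem coordPerm_symm (π : Perm α) : (coordPerm π).symm = coordPerm (β := β) π⁻¹ := rfl

theorem coordPerm_apply_of_apply_eq {π : Perm α} {a : α} (h : π a = a) (x : α → β) :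
    coordPerm π x a = x a := by
  rw [coordPerm_apply, Perm.inv_eq_iff_eq.2 h.symm]

theorem coordPerm_image_cyl [DecidableEq α] (π : Perm α) (A : Finset α) (σ : α → β) :
    coordPerm π '' cyl A σ = cyl (A.image π) (σ ∘ ⇑π⁻¹) := by
  ext x
  simp only [Equiv.image_eq_preimage_symm, coordPerm_symm, mem_preimage, mem_cyl, coordPerm_apply,
    inv_inv, Finset.forall_mem_image, Function.comp_apply, Perm.coe_inv, symm_apply_apply]

theorem coordPerm_image_cyl_of_forall_apply_eq {π : Perm α} {A : Finset α}
    (h : ∀ a ∈ A, π a = a) (σ : α → β) : coordPerm π '' cyl A σ = cyl A σ := by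
  ext x
  simp only [Equiv.image_eq_preimage_symm, coordPerm_symm, mem_preimage, mem_cyl, coordPerm_apply,
    inv_inv]
  exact forall₂_congr fun a ha => by rw [h a ha]

theorem measurable_coordPerm [MeasurableSpace β] (π : Perm α) :
    Measurable (coordPerm (β := β) π) :=
  measurable_pi_lambda _ fun _ => measurable_pi_apply _

end CoordPerm

namespace IsBernoulli

variable {ℓ m : ℕ} {P : Fin m → ℝ} {μ : Measure (Conf ℓ m)}

theorem measureReal_cyl (hμ : IsBernoulli P μ) (A : Finset (FG ℓ)) (σ : Conf ℓ m) :
    μ.real (cyl A σ) = ∏ g ∈ A, P (σ g) :=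
  hμ.2 A σ

theorem ext {ν : Measure (Conf ℓ m)} (hμ : IsBernoulli P μ) (hν : IsBernoulli P ν) : μ = ν := by
  have := hμ.1
  have := hν.1
  refine ext_of_generate_finite _ generateFrom_cyl.symm isPiSystem_cyl ?_ (by simp)
  rintro _ ⟨A, σ, rfl⟩
  rw [← ENNReal.toReal_eq_toReal_iff' (measure_ne_top _ _) (measure_ne_top _ _)]
  exact (hμ.measureReal_cyl A σ).trans (hν.measureReal_cyl A σ).symm

theorem measureReal_cyl_image (hμ : IsBernoulli P μ) (π : Perm (FG ℓ)) (A : Finset (FG ℓ))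
    (σ : Conf ℓ m) : μ.real (cyl (A.image π) (σ ∘ ⇑π⁻¹)) = μ.real (cyl A σ) := by
  rw [hμ.measureReal_cyl, hμ.measureReal_cyl, Finset.prod_image π.injective.injOn]
  simp

theorem map_coordPerm (hμ : IsBernoulli P μ) (π : Perm (FG ℓ)) :
    IsBernoulli P (μ.map (coordPerm π)) := by
  have := hμ.1
  refine ⟨Measure.isProbabilityMeasure_map (measurable_coordPerm π).aemeasurable, fun A σ => ?_⟩
  change (μ.map (coordPerm π)).real (cyl A σ) = _
  classical
  rw [map_measureReal_apply (measurable_coordPerm π) (measurableSet_cyl A σ),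
    ← Equiv.image_symm_eq_preimage, coordPerm_symm, coordPerm_image_cyl,
    hμ.measureReal_cyl_image, hμ.measureReal_cyl]

theorem measurePreserving_coordPerm (hμ : IsBernoulli P μ) (π : Perm (FG ℓ)) :
    MeasurePreserving (coordPerm π) μ μ :=
  ⟨measurable_coordPerm π, (hμ.map_coordPerm π).ext hμ⟩

theorem measureReal_cyl_inter_of_disjoint (hμ : IsBernoulli P μ) {A A' : Finset (FG ℓ)}
    (σ σ' : Conf ℓ m) (h : Disjoint A A') :
    μ.real (cyl A σ ∩ cyl A' σ') = μ.real (cyl A σ) * μ.real (cyl A' σ') := by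
  classical
  rw [cyl_inter_cyl fun i hi hi' => absurd hi' (Finset.disjoint_left.1 h hi), hμ.measureReal_cyl,
    hμ.measureReal_cyl, hμ.measureReal_cyl, Finset.prod_union h]
  congr 1 <;> refine Finset.prod_congr rfl fun g hg => ?_
  · rw [Finset.piecewise_eq_of_mem _ _ _ hg]
  · rw [Finset.piecewise_eq_of_notMem _ _ _ (Finset.disjoint_right.1 h hg)]

theorem measureReal_image_coordPerm_inter_mul (hμ : IsBernoulli P μ) {A A' B : Finset (FG ℓ)}
    {σ σ' η : Conf ℓ m} (hA : cyl A σ ⊆ cyl B η) (hA' : cyl A' σ' ⊆ cyl B η) {ρ : Perm (FG ℓ)}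
    (hρB : ∀ g ∈ B, ρ g = g) (hρA : ∀ g ∈ A \ B, ρ g ∉ A') :
    μ.real (coordPerm ρ '' cyl A σ ∩ cyl A' σ') * μ.real (cyl B η) =
      μ.real (cyl A σ) * μ.real (cyl A' σ') := by
  classical
  have hsplit := cyl_eq_cyl_sdiff_inter hA
  have himage : coordPerm ρ '' cyl A σ ∩ cyl A' σ' =
      cyl ((A \ B).image ρ) (σ ∘ ⇑ρ⁻¹) ∩ cyl A' σ' := by
    rw [hsplit, image_inter (coordPerm ρ).injective, coordPerm_image_cyl_of_forall_apply_eq hρB,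
      coordPerm_image_cyl, inter_assoc, inter_eq_right.2 hA']
  have hdisj : Disjoint ((A \ B).image ρ) A' := Finset.disjoint_left.2 fun g hg hg' => by
    obtain ⟨g₀, hg₀, rfl⟩ := Finset.mem_image.1 hg
    exact hρA g₀ hg₀ hg'
  rw [himage, hμ.measureReal_cyl_inter_of_disjoint _ _ hdisj, hμ.measureReal_cyl_image, hsplit,
    hμ.measureReal_cyl_inter_of_disjoint _ _ Finset.sdiff_disjoint]
  ring

end IsBernoulli

section MovingFinitelyManyPoints

variable {α : Type*}

theorem apply_eq_self_of_notMem {π : Perm α} {t : Set α} (h : {x | π x ≠ x} ⊆ t) {x : α}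
    (hx : x ∉ t) : π x = x :=
  not_not.1 fun hne => hx (h hne)

theorem exists_perm_mapsTo_compl {s t u : Set α} (hs : s.Finite) (hu : u.Finite) (hst : s ⊆ t)
    (ht : t.Infinite) :
    ∃ π : Perm α, {x | π x ≠ x}.Finite ∧ {x | π x ≠ x} ⊆ t ∧ MapsTo π s uᶜ := by
  have := hs.to_subtype
  have hfresh : (t \ (s ∪ u)).Infinite := ht.sdiff (hs.union hu)
  let φ : s ↪ (t \ (s ∪ u) : Set α) := (nonempty_embedding_nat s).some.trans (hfresh.natEmbedding _)
  let f : s ⊕ s ↪ α :=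
    ⟨Sum.elim (↑) fun x => φ x, Subtype.val_injective.sumElim
      (Subtype.val_injective.comp φ.injective) fun x y h => (φ y).2.2 (Or.inl (h ▸ x.2))⟩
  have hsupp : {x | Perm.viaEmbedding (Equiv.sumComm s s) f x ≠ x} ⊆ range f := fun x hx => by
    by_contra hxf
    exact hx (Perm.viaEmbedding_apply_of_notMem _ _ x hxf)
  refine ⟨Perm.viaEmbedding (Equiv.sumComm s s) f, (finite_range f).subset hsupp,
    hsupp.trans ?_, fun x hx => ?_⟩
  · rintro _ ⟨x | x, rfl⟩
    exacts [hst x.2, (φ x).2.1]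
  · change Perm.viaEmbedding (Equiv.sumComm s s) f (f (Sum.inl ⟨x, hx⟩)) ∉ u
    rw [Perm.viaEmbedding_apply]
    exact fun h => (φ ⟨x, hx⟩).2.2 (Or.inr h)

theorem mapsTo_mul_compl {p q : Perm α} {s t u : Set α} (hp : {x | p x ≠ x} ⊆ t)
    (hq : {x | q x ≠ x} ⊆ tᶜ) (hps : MapsTo p (s ∩ t) uᶜ) (hqs : MapsTo q (s \ t) uᶜ) :
    MapsTo (p * q) s uᶜ := by
  intro x hx
  by_cases hxt : x ∈ t
  · rw [Perm.mul_apply, apply_eq_self_of_notMem hq (not_not.2 hxt)]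
    exact hps ⟨hx, hxt⟩
  · have hqxt : q x ∉ t := fun h => by
      have : q (q x) = q x := apply_eq_self_of_notMem hq (not_not.2 h)
      exact hxt (q.injective this ▸ h)
    rw [Perm.mul_apply, apply_eq_self_of_notMem hp hqxt]
    exact hqs ⟨hx, hxt⟩

end MovingFinitelyManyPoints

theorem ball_finite (ℓ r : ℕ) : (ball ℓ r).Finite :=
  (List.finite_length_le _ r).preimage FreeGroup.toWord_injective.injOn

section FreeGroup

variable {ℓ : ℕ}

theorem of_pow_succ_mem_Wa (a : Fin ℓ) (n : ℕ) : FreeGroup.of a ^ (n + 1) ∈ Wa a := by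
  refine Or.inr ?_
  rw [pow_succ, mul_inv_cancel_right, ← pow_succ, wl, wl, FreeGroup.norm_of_pow,
    FreeGroup.norm_of_pow]

theorem inv_of_pow_succ_notMem_Wa (a : Fin ℓ) (n : ℕ) : (FreeGroup.of a ^ (n + 1))⁻¹ ∉ Wa a := by
  have hnorm : ∀ k, wl (FreeGroup.of a ^ k)⁻¹ = k := fun k => by
    rw [wl, FreeGroup.norm_inv_eq, FreeGroup.norm_of_pow]
  rintro (h | h)
  · have := hnorm (n + 1)
    rw [h, wl, FreeGroup.norm_one] at this
    omega
  · rw [← mul_inv_rev, ← pow_succ', hnorm, hnorm] at h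
    omega

theorem Wa_infinite (a : Fin ℓ) : (Wa a).Infinite :=
  infinite_of_injective_forall_mem (f := fun n : ℕ => FreeGroup.of a ^ (n + 1))
    (fun n n' h => by simpa using congrArg FreeGroup.norm h) (of_pow_succ_mem_Wa a)

theorem compl_Wa_infinite (a : Fin ℓ) : (Wa a)ᶜ.Infinite :=
  infinite_of_injective_forall_mem (f := fun n : ℕ => (FreeGroup.of a ^ (n + 1))⁻¹)
    (fun n n' h => by simpa using congrArg FreeGroup.norm h) (inv_of_pow_succ_notMem_Wa a)

end FreeGroup

section HC

variable {ℓ m : ℕ} {P : Fin m → ℝ} {μ : Measure (Conf ℓ m)}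

theorem isLocallyFiniteMP_coordPerm (hμ : IsBernoulli P μ) {π : Perm (FG ℓ)}
    (hπ : {g | π g ≠ g}.Finite) : IsLocallyFiniteMP μ (coordPerm π) :=
  ⟨measurable_coordPerm π, measurable_coordPerm π⁻¹, hμ.measurePreserving_coordPerm π,
    Eventually.of_forall fun x => hπ.subset fun _ hg h => hg (coordPerm_apply_of_apply_eq h x)⟩

theorem coordPerm_mem_HCplus (hμ : IsBernoulli P μ) (a : Fin ℓ) (N : ℕ) {π : Perm (FG ℓ)}
    (hπ : {g | π g ≠ g}.Finite) (hsupp : {g | π g ≠ g} ⊆ Wa a \ ball ℓ N) :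
    coordPerm π ∈ HCplus μ a N := by
  refine ⟨isLocallyFiniteMP_coordPerm hμ hπ, Eventually.of_forall fun x g hg => ?_⟩
  refine coordPerm_apply_of_apply_eq (apply_eq_self_of_notMem hsupp fun ⟨hgW, hgB⟩ => ?_) x
  rcases hg with hg | hg
  exacts [hgB hg, hg hgW]

theorem coordPerm_mem_HCminus (hμ : IsBernoulli P μ) (a : Fin ℓ) (N : ℕ) {π : Perm (FG ℓ)}
    (hπ : {g | π g ≠ g}.Finite) (hsupp : {g | π g ≠ g} ⊆ (Wa a)ᶜ \ ball ℓ N) :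
    coordPerm π ∈ HCminus μ a N := by
  refine ⟨isLocallyFiniteMP_coordPerm hμ hπ, Eventually.of_forall fun x g hg => ?_⟩
  refine coordPerm_apply_of_apply_eq (apply_eq_self_of_notMem hsupp fun ⟨hgW, hgB⟩ => ?_) x
  rcases hg with hg | hg
  exacts [hgW hg, hgB hg]

end HC

theorem div_eq_div_mul_div_of_mul_eq {K : Type*} [Field K] {a b c d : K} (h : a * c = b * d) :
    a / c = b / c * (d / c) := by
  rcases eq_or_ne c 0 with rfl | hc
  · simp
  · field_simp
    exact h

theorem HC_mixes_cylinders_general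
    {ℓ m : ℕ} (a : Fin ℓ) (P : Fin m → ℝ)
    (μp : Measure (Conf ℓ m)) (hμp : IsBernoulli P μp)
    (N : ℕ) (η : FG ℓ → Fin m)
    (k : ℕ) (A : Fin k → Finset (FG ℓ)) (σ : Fin k → FG ℓ → Fin m)
    (hsub : ∀ i, {x : Conf ℓ m | ∀ g ∈ A i, x g = σ i g} ⊆ cylOn (ball ℓ N) η) :
    ∃ hplus ∈ HCplus μp a N, ∃ hminus ∈ HCminus μp a N, ∀ i j : Fin k,
      relMeas μp (cylOn (ball ℓ N) η)
          ((⇑(hplus * hminus)) '' {x : Conf ℓ m | ∀ g ∈ A i, x g = σ i g} ∩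
            {x : Conf ℓ m | ∀ g ∈ A j, x g = σ j g})
        = relMeas μp (cylOn (ball ℓ N) η) {x : Conf ℓ m | ∀ g ∈ A i, x g = σ i g} *
          relMeas μp (cylOn (ball ℓ N) η) {x : Conf ℓ m | ∀ g ∈ A j, x g = σ j g} := by
  classical
  set B := (ball_finite ℓ N).toFinset
  have hC : cylOn (ball ℓ N) η = cyl B η := by ext; simp [cylOn, B]
  set U := ⋃ i, (A i : Set (FG ℓ))
  have hU : U.Finite := finite_iUnion fun i => (A i).finite_toSet
  obtain ⟨p, hp, hp_supp, hp_maps⟩ := exists_perm_mapsTo_compl (t := Wa a \ ball ℓ N)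
    (hU.sdiff.inter_of_left (Wa a)) hU (fun g hg => ⟨hg.2, hg.1.2⟩)
    ((Wa_infinite a).sdiff (ball_finite ℓ N))
  obtain ⟨q, hq, hq_supp, hq_maps⟩ := exists_perm_mapsTo_compl (t := (Wa a)ᶜ \ ball ℓ N)
    hU.sdiff.sdiff hU (fun g hg => ⟨hg.2, hg.1.2⟩) ((compl_Wa_infinite a).sdiff (ball_finite ℓ N))
  have hρB : ∀ g ∈ B, (p * q) g = g := fun g hg => by
    have hgN : g ∈ ball ℓ N := (ball_finite ℓ N).mem_toFinset.1 hg
    rw [Perm.mul_apply, apply_eq_self_of_notMem hq_supp fun h => h.2 hgN,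
      apply_eq_self_of_notMem hp_supp fun h => h.2 hgN]
  have hρU : MapsTo (p * q) (U \ ball ℓ N) Uᶜ :=
    mapsTo_mul_compl (hp_supp.trans sdiff_subset) (hq_supp.trans sdiff_subset) hp_maps hq_maps
  have hρA : ∀ i j, ∀ g ∈ A i \ B, (p * q) g ∉ A j := fun i j g hg hgj => by
    rw [Finset.mem_sdiff, (ball_finite ℓ N).mem_toFinset] at hg
    exact hρU ⟨mem_iUnion_of_mem i hg.1, hg.2⟩ (mem_iUnion_of_mem j hgj)
  refine ⟨coordPerm p, coordPerm_mem_HCplus hμp a N hp hp_supp,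
    coordPerm q, coordPerm_mem_HCminus hμp a N hq hq_supp, fun i j => ?_⟩
  rw [← map_mul, relMeas, relMeas, relMeas]
  refine div_eq_div_mul_div_of_mul_eq ?_
  rw [hC]
  exact hμp.measureReal_image_coordPerm_inter_mul (hC ▸ hsub i) (hC ▸ hsub j) hρB (hρA i j)

theorem HC_mixes_cylinders
    {ℓ m : ℕ} (hℓ : 1 ≤ ℓ) (a : Fin ℓ) (P : Fin m → ℝ)
    (hP : ∀ i, 0 < P i) (hPsum : ∑ i, P i = 1)
    (μp : Measure (Conf ℓ m)) (hμp : IsBernoulli P μp)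
    (N : ℕ) (η : FG ℓ → Fin m)
    (k : ℕ) (A : Fin k → Finset (FG ℓ)) (σ : Fin k → FG ℓ → Fin m)
    (hsub : ∀ i, {x : Conf ℓ m | ∀ g ∈ A i, x g = σ i g} ⊆ cylOn (ball ℓ N) η) :
    ∃ hplus ∈ HCplus μp a N, ∃ hminus ∈ HCminus μp a N, ∀ i j : Fin k,
      relMeas μp (cylOn (ball ℓ N) η)
          ((⇑(hplus * hminus)) '' {x : Conf ℓ m | ∀ g ∈ A i, x g = σ i g} ∩
            {x : Conf ℓ m | ∀ g ∈ A j, x g = σ j g})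
        = relMeas μp (cylOn (ball ℓ N) η) {x : Conf ℓ m | ∀ g ∈ A i, x g = σ i g} *
          relMeas μp (cylOn (ball ℓ N) η) {x : Conf ℓ m | ∀ g ∈ A j, x g = σ j g} :=
  HC_mixes_cylinders_general a P μp hμp N η k A σ hsub

end Finitary
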